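/- For the 2D ACC atomistic contribution a_b of a bond b = (i,i+r), whose intersection pattern with Ω_a is encoded by 0 = t₀ < t₁ < ⋯ < t_M = 1 and constant weights w_m = χ_{Ω_a}(i+rt) on (t_{m−1}, t_m), the variation at the uniform deformation y = Fx satisfies a_b'(Fx; v) + c_b'(Fx; v) = ∇φ(Fr)·(v_{i+r} − v_i) = e_b'(Fx; v), where c_b(y) := ⨍_b χ_{Ω_c} φ(D_r y) db. -/

import Mathlib

/-!
Write `Δt m = t m.succ - t m.castSucc`. On each piece `[t m.castSucc, t m.succ]` the displacement
along the bond is affine with some slope `a m`, so `D_r v = a m` in the interior of the piece and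
the continuum integrand is `(1 - w m) φ (Fr + s • a m)` there, whence
`c_b'(Fx; v) = ∇φ(Fr) · ∑ (1 - w m) Δt m a m`. Linearity of `F` turns the argument of `φ` in `a_b`
into `Fr + s • L⁻¹ ∑ w m Δt m a m`, so `a_b'(Fx; v) = ∇φ(Fr) · ∑ w m Δt m a m`. The two weights add
up to `1`, and `∑ Δt m a m` telescopes to `v_{i+r} - v_i`, the variation of `e_b`.
-/
open MeasureTheory

/-- Embedding of the lattice `ℤ²` into `ℝ²`. -/
noncomputable def c2 (i : ℤ × ℤ) : ℝ × ℝ := ((i.1 : ℝ), (i.2 : ℝ))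

/-- One-sided directional derivative `D_r v (x)` of a vector-valued function. -/
noncomputable def Dr (r : ℝ × ℝ) (v : ℝ × ℝ → ℝ × ℝ) (x : ℝ × ℝ) : ℝ × ℝ :=
  derivWithin (fun s : ℝ => v (x + s • r)) (Set.Ioi (0 : ℝ)) 0

open Set

theorem Fin.sum_univ_succ_sub_castSucc {G : Type*} [AddCommGroup G] :
    ∀ {n : ℕ} (f : Fin (n + 1) → G),
      ∑ m : Fin n, (f m.succ - f m.castSucc) = f (Fin.last n) - f 0
  | 0, f => by simp
  | n + 1, f => by
    rw [Fin.sum_univ_castSucc]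
    simp only [Fin.succ_castSucc]
    rw [Fin.sum_univ_succ_sub_castSucc (fun k => f k.castSucc)]
    simp only [Fin.castSucc_zero, Fin.succ_last]
    abel

section StepFunction

variable {E : Type*} [NormedAddCommGroup E]

theorem intervalIntegral.sum_integral_adjacent_intervals_fin [NormedSpace ℝ E] {μ : Measure ℝ}
    {f : ℝ → E} {M : ℕ} {t : Fin (M + 1) → ℝ}
    (hf : ∀ m : Fin M, IntervalIntegrable f μ (t m.castSucc) (t m.succ)) :
    ∑ m : Fin M, ∫ x in t m.castSucc..t m.succ, f x ∂μ = ∫ x in t 0..t (Fin.last M), f x ∂μ := by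
  have hclamp : ∀ m : Fin M,
      t (Fin.clamp m M) = t m.castSucc ∧ t (Fin.clamp (m + 1) M) = t m.succ :=
    fun m => ⟨congrArg t (Fin.ext (min_eq_left m.2.le)), congrArg t (Fin.ext (min_eq_left m.2))⟩
  have key := intervalIntegral.sum_integral_adjacent_intervals (μ := μ) (f := f)
    (a := fun k => t (Fin.clamp k M)) (n := M) fun k hk => by
      obtain ⟨h0, h1⟩ := hclamp ⟨k, hk⟩
      simp only at h0 h1 ⊢
      rw [h0, h1]
      exact hf _
  rw [← Fin.sum_univ_eq_sum_range
    (fun k => ∫ x in t (Fin.clamp k M)..t (Fin.clamp (k + 1) M), f x ∂μ)] at key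
  simp only [hclamp] at key
  convert key using 3 <;> exact Fin.ext (by simp [Fin.clamp])

variable {f : ℝ → E} {a b : ℝ} {c : E}

theorem intervalIntegrable_of_eqOn_Ioo (hab : a ≤ b) (hf : EqOn f (fun _ => c) (Ioo a b)) :
    IntervalIntegrable f volume a b := by
  rw [intervalIntegrable_iff_integrableOn_Ioc_of_le hab, integrableOn_Ioc_iff_integrableOn_Ioo]
  exact (integrableOn_const measure_Ioo_lt_top.ne).congr_fun hf.symm measurableSet_Ioo

variable [NormedSpace ℝ E] [CompleteSpace E]

theorem intervalIntegral.integral_eq_sub_smul_of_eqOn_Ioo (hab : a ≤ b)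
    (hf : EqOn f (fun _ => c) (Ioo a b)) : ∫ x in a..b, f x = (b - a) • c := by
  rw [intervalIntegral.integral_of_le hab, integral_Ioc_eq_integral_Ioo,
    setIntegral_congr_fun measurableSet_Ioo hf, setIntegral_const, Real.volume_real_Ioo_of_le hab]

theorem intervalIntegral.integral_eq_sum_of_eqOn_Ioo {M : ℕ} {t : Fin (M + 1) → ℝ}
    (ht : Monotone t) {c : Fin M → E}
    (hf : ∀ m, EqOn f (fun _ => c m) (Ioo (t m.castSucc) (t m.succ))) :
    ∫ x in t 0..t (Fin.last M), f x = ∑ m, (t m.succ - t m.castSucc) • c m := by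
  have hle : ∀ m : Fin M, t m.castSucc ≤ t m.succ := fun m => ht (Fin.castSucc_le_succ m)
  rw [← intervalIntegral.sum_integral_adjacent_intervals_fin
    fun m => intervalIntegrable_of_eqOn_Ioo (hle m) (hf m)]
  exact Finset.sum_congr rfl fun m _ => integral_eq_sub_smul_of_eqOn_Ioo (hle m) (hf m)

end StepFunction

theorem c2_add (i j : ℤ × ℤ) : c2 (i + j) = c2 i + c2 j := by
  simp [c2]

theorem Dr_apply_eq_of_affine {v : ℝ × ℝ → ℝ × ℝ} {x r A C : ℝ × ℝ} {a b l : ℝ}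
    (hv : ∀ l ∈ Icc a b, v (x + l • r) = l • A + C) (hl : l ∈ Ico a b) :
    Dr r v (x + l • r) = A := by
  have hderiv : HasDerivAt (fun s : ℝ => (l + s) • A + C) A 0 := by
    simpa using (((hasDerivAt_id (0 : ℝ)).const_add l).smul_const A).add_const C
  refine (hderiv.hasDerivWithinAt.congr_of_eventuallyEq ?_ ?_).derivWithin
    (uniqueDiffWithinAt_Ioi 0)
  · filter_upwards [Ioo_mem_nhdsGT (sub_pos.2 hl.2)] with s hs
    rw [add_assoc, ← add_smul]
    exact hv _ ⟨by linarith [hl.1, hs.1], by linarith [hs.2]⟩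
  · simpa using hv l (Ico_subset_Icc_self hl)

theorem sum_smul_increment_linearMap_add_smul {E E' : Type*} [AddCommGroup E] [Module ℝ E]
    [AddCommGroup E'] [Module ℝ E'] (F : E →ₗ[ℝ] E') (v : E → E') (x r : E) {M : ℕ}
    (t : Fin (M + 1) → ℝ) (w : Fin M → ℝ) (s : ℝ) :
    ∑ m, w m • ((F (x + t m.succ • r) + s • v (x + t m.succ • r))
        - (F (x + t m.castSucc • r) + s • v (x + t m.castSucc • r)))
      = (∑ m, w m * (t m.succ - t m.castSucc)) • F r
        + s • ∑ m, w m • (v (x + t m.succ • r) - v (x + t m.castSucc • r)) := by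
  rw [Finset.sum_smul, Finset.smul_sum, ← Finset.sum_add_distrib]
  refine Finset.sum_congr rfl fun m _ => ?_
  simp only [map_add, map_smul, smul_sub, smul_add, smul_smul, mul_sub, sub_smul, mul_comm s]
  abel

theorem hasDerivAt_mul_apply_inv_smul {E : Type*} [NormedAddCommGroup E] [NormedSpace ℝ E]
    {φ : E → ℝ} {x : E} (hφ : DifferentiableAt ℝ φ x) {L : ℝ} (hL : L ≠ 0) (u : E) :
    HasDerivAt (fun s : ℝ => L * φ (L⁻¹ • (L • x + s • u))) (fderiv ℝ φ x u) 0 := by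
  have hscale : ∀ s : ℝ, L⁻¹ • (L • x + s • u) = x + s • (L⁻¹ • u) := fun s => by
    rw [smul_add, inv_smul_smul₀ hL, smul_comm]
  have hline := (hφ.hasFDerivAt.hasLineDerivAt (L⁻¹ • u)).const_mul L
  simp only [hscale, map_smul, smul_eq_mul, mul_inv_cancel_left₀ hL] at hline ⊢
  exact hline

section PiecewiseAffine

variable {E : Type*} [AddCommGroup E] [Module ℝ E]

theorem sub_eq_smul_of_affine_on_Icc {γ : ℝ → E} {a b : ℝ} {A C : E} (hab : a ≤ b)
    (hγ : ∀ l ∈ Icc a b, γ l = l • A + C) : γ b - γ a = (b - a) • A := by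
  rw [hγ b (right_mem_Icc.2 hab), hγ a (left_mem_Icc.2 hab), sub_smul]
  abel

theorem sub_eq_sum_smul_of_piecewise_affine {γ : ℝ → E} {M : ℕ} {t : Fin (M + 1) → ℝ}
    (ht : Monotone t) {a c : Fin M → E}
    (hγ : ∀ m, ∀ l ∈ Icc (t m.castSucc) (t m.succ), γ l = l • a m + c m) :
    γ (t (Fin.last M)) - γ (t 0) = ∑ m, (t m.succ - t m.castSucc) • a m := by
  rw [← Fin.sum_univ_succ_sub_castSucc fun k => γ (t k)]
  exact Finset.sum_congr rfl fun m _ =>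
    sub_eq_smul_of_affine_on_Icc (ht (Fin.castSucc_le_succ m)) (hγ m)

end PiecewiseAffine

theorem hasDerivAt_weighted_bond_average {E : Type*} [NormedAddCommGroup E] [NormedSpace ℝ E]
    {φ : E → ℝ} (F : E →ₗ[ℝ] E) (v : E → E) (x r : E) {M : ℕ} (t : Fin (M + 1) → ℝ)
    (w : Fin M → ℝ) (hφ : DifferentiableAt ℝ φ (F r)) {L : ℝ}
    (hL : L = ∑ m, w m * (t m.succ - t m.castSucc)) (hL0 : L ≠ 0) :
    HasDerivAt
      (fun s : ℝ => L * φ (L⁻¹ • ∑ m, w m •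
        ((F (x + t m.succ • r) + s • v (x + t m.succ • r))
          - (F (x + t m.castSucc • r) + s • v (x + t m.castSucc • r)))))
      (fderiv ℝ φ (F r) (∑ m, w m • (v (x + t m.succ • r) - v (x + t m.castSucc • r)))) 0 := by
  simp only [sum_smul_increment_linearMap_add_smul, ← hL]
  exact hasDerivAt_mul_apply_inv_smul hφ hL0 _

theorem hasDerivAt_integral_mul_comp_Dr {φ : ℝ × ℝ → ℝ} {x : ℝ × ℝ}
    (hφ : DifferentiableAt ℝ φ x) {v : ℝ × ℝ → ℝ × ℝ} {p r : ℝ × ℝ} {M : ℕ}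
    {t : Fin (M + 1) → ℝ} (ht : Monotone t) {ρ : ℝ → ℝ} {ρm : Fin M → ℝ}
    (hρ : ∀ m, ∀ l ∈ Ioo (t m.castSucc) (t m.succ), ρ l = ρm m) {a c : Fin M → ℝ × ℝ}
    (hv : ∀ m, ∀ l ∈ Icc (t m.castSucc) (t m.succ), v (p + l • r) = l • a m + c m) :
    HasDerivAt (fun s : ℝ => ∫ l in t 0..t (Fin.last M), ρ l * φ (x + s • Dr r v (p + l • r)))
      (∑ m, (t m.succ - t m.castSucc) * (ρm m * fderiv ℝ φ x (a m))) 0 := by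
  have hsum : ∀ s : ℝ, ∫ l in t 0..t (Fin.last M), ρ l * φ (x + s • Dr r v (p + l • r))
      = ∑ m, (t m.succ - t m.castSucc) * (ρm m * φ (x + s • a m)) := fun s =>
    intervalIntegral.integral_eq_sum_of_eqOn_Ioo ht fun m l hl => by
      simp only [hρ m l hl, Dr_apply_eq_of_affine (hv m) (Ioo_subset_Ico_self hl)]
  simp only [hsum]
  exact HasDerivAt.fun_sum fun m _ =>
    ((hφ.hasFDerivAt.hasLineDerivAt (a m)).const_mul (ρm m)).const_mul _

theorem acc_variation_2d_general
    (φ : ℝ × ℝ → ℝ) (hφ : ContDiff ℝ 1 φ) (F : (ℝ × ℝ) →ₗ[ℝ] (ℝ × ℝ))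
    (i r : ℤ × ℤ)
    (v : ℝ × ℝ → ℝ × ℝ)
    (M : ℕ) (t : Fin (M + 1) → ℝ) (ht : StrictMono t)
    (ht0 : t 0 = 0) (ht1 : t (Fin.last M) = 1)
    (w : Fin M → ℝ)
    (wfun : ℝ → ℝ)
    (hwfun : ∀ m : Fin M, ∀ l ∈ Set.Ioo (t m.castSucc) (t m.succ), wfun l = w m)
    (haff : ∀ m : Fin M, ∃ a c : ℝ × ℝ,
      ∀ l ∈ Set.Icc (t m.castSucc) (t m.succ), v (c2 i + l • c2 r) = l • a + c)
    (L : ℝ) (hL : L = ∑ m, w m * (t m.succ - t m.castSucc)) (hLpos : 0 < L) :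
    HasDerivAt
        (fun s : ℝ =>
          L * φ (L⁻¹ • ∑ m, w m •
              (((F (c2 i + t m.succ • c2 r) + s • v (c2 i + t m.succ • c2 r))
                - (F (c2 i + t m.castSucc • c2 r) + s • v (c2 i + t m.castSucc • c2 r)))))
          + ∫ l in (0:ℝ)..1,
              (1 - wfun l) * φ (F (c2 r) + s • Dr (c2 r) v (c2 i + l • c2 r)))
        (fderiv ℝ φ (F (c2 r)) (v (c2 (i + r)) - v (c2 i))) 0
      ∧ HasDerivAt
        (fun s : ℝ =>
          φ ((F (c2 (i + r)) + s • v (c2 (i + r))) - (F (c2 i) + s • v (c2 i))))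
        (fderiv ℝ φ (F (c2 r)) (v (c2 (i + r)) - v (c2 i))) 0 := by
  have hφr : DifferentiableAt ℝ φ (F (c2 r)) := hφ.differentiable one_ne_zero _
  choose a c hac using haff
  have hatom := hasDerivAt_weighted_bond_average F v (c2 i) (c2 r) t w hφr hL hLpos.ne'
  have hcont := hasDerivAt_integral_mul_comp_Dr hφr ht.monotone (ρ := fun l => 1 - wfun l)
    (fun m l hl => by rw [hwfun m l hl]) hac
  rw [ht0, ht1] at hcont
  have hbond : v (c2 (i + r)) - v (c2 i) = ∑ m, (t m.succ - t m.castSucc) • a m := by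
    simpa [ht0, ht1, c2_add] using sub_eq_sum_smul_of_piecewise_affine ht.monotone hac
  constructor
  · refine (hatom.add hcont).congr_deriv ?_
    rw [hbond, map_sum, map_sum, ← Finset.sum_add_distrib]
    refine Finset.sum_congr rfl fun m _ => ?_
    rw [sub_eq_smul_of_affine_on_Icc (ht Fin.castSucc_lt_succ).le (hac m)]
    simp only [map_smul, smul_eq_mul]
    ring
  · refine HasDerivAt.congr_of_eventuallyEq
      (hφr.hasFDerivAt.hasLineDerivAt (v (c2 (i + r)) - v (c2 i))) (.of_forall fun s => ?_)
    dsimp only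
    rw [c2_add, map_add, smul_sub]
    congr 1
    abel

/-- For the 2D ACC atomistic contribution `a_b` of a bond `b = (i, i+r)`, whose intersection
pattern with `Ω_a` is encoded by `0 = t₀ < t₁ < ⋯ < t_M = 1` and constant weights
`w_m = χ_{Ω_a}` on `(t_{m−1}, t_m)` (with `χ_{Ω_a} + χ_{Ω_c} = 1` along the bond, so that
`χ_{Ω_c} = 1 − w` there), the variation at the uniform deformation `y = Fx` satisfies
`a_b'(Fx; v) + c_b'(Fx; v) = ∇φ(Fr)·(v_{i+r} − v_i) = e_b'(Fx; v)`, where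
`c_b(y) = ⨍_b χ_{Ω_c} φ(D_r y) db`. -/
theorem acc_variation_2d
    (φ : ℝ × ℝ → ℝ) (hφ : ContDiff ℝ 1 φ) (F : (ℝ × ℝ) →ₗ[ℝ] (ℝ × ℝ))
    (i r : ℤ × ℤ) (hr : r ≠ 0)
    (v : ℝ × ℝ → ℝ × ℝ) (hvcont : Continuous v)
    (M : ℕ) (t : Fin (M + 1) → ℝ) (ht : StrictMono t)
    (ht0 : t 0 = 0) (ht1 : t (Fin.last M) = 1)
    (w : Fin M → ℝ) (hw : ∀ m, w m ∈ Set.Icc (0:ℝ) 1)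
    (wfun : ℝ → ℝ)
    (hwfun : ∀ m : Fin M, ∀ l ∈ Set.Ioo (t m.castSucc) (t m.succ), wfun l = w m)
    (haff : ∀ m : Fin M, ∃ a c : ℝ × ℝ,
      ∀ l ∈ Set.Icc (t m.castSucc) (t m.succ), v (c2 i + l • c2 r) = l • a + c)
    (L : ℝ) (hL : L = ∑ m, w m * (t m.succ - t m.castSucc)) (hLpos : 0 < L) :
    HasDerivAt
        (fun s : ℝ =>
          L * φ (L⁻¹ • ∑ m, w m •
              (((F (c2 i + t m.succ • c2 r) + s • v (c2 i + t m.succ • c2 r))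
                - (F (c2 i + t m.castSucc • c2 r) + s • v (c2 i + t m.castSucc • c2 r)))))
          + ∫ l in (0:ℝ)..1,
              (1 - wfun l) * φ (F (c2 r) + s • Dr (c2 r) v (c2 i + l • c2 r)))
        (fderiv ℝ φ (F (c2 r)) (v (c2 (i + r)) - v (c2 i))) 0
      ∧ HasDerivAt
        (fun s : ℝ =>
          φ ((F (c2 (i + r)) + s • v (c2 (i + r))) - (F (c2 i) + s • v (c2 i))))
        (fderiv ℝ φ (F (c2 r)) (v (c2 (i + r)) - v (c2 i))) 0 :=
  acc_variation_2d_general φ hφ F i r v M t ht ht0 ht1 w wfun hwfun haff L hL hLpos
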